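/- Monotonicity of the exchange bound: for jobs released at time 0 scheduled by Smith's rule (nondecreasing p_i/w_i), the total weighted completion time equals sum over pairs i <= j (in schedule order) of w_j * p_i, and any transposition of two non-adjacent jobs violating Smith's order does not decrease the objective. -/
import Mathlib

/-- (a) The total weighted completion time of a schedule equals the sum over
pairs of positions `i ≤ j` of `w_{σ j} * p_{σ i}`; (b) if `σ` is ordered by
Smith's rule (nondecreasing `p/w`), then transposing any two positions
(in particular two non-adjacent jobs, creating a violation of Smith's order)
does not decrease the objective. -/
theorem stmt_15 (n : ℕ) (p w : Fin n → ℝ)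
    (hp : ∀ i, 0 < p i) (hw : ∀ i, 0 < w i) (σ : Equiv.Perm (Fin n)) :
    (∑ j : Fin n, w (σ j) * ∑ i ∈ Finset.univ.filter (· ≤ j), p (σ i)
        = ∑ j : Fin n, ∑ i ∈ Finset.univ.filter (· ≤ j), w (σ j) * p (σ i))
    ∧ ((∀ i j : Fin n, i ≤ j → p (σ i) / w (σ i) ≤ p (σ j) / w (σ j)) →
        ∀ i j : Fin n, i < j →
          (∑ k : Fin n, w (σ k) * ∑ l ∈ Finset.univ.filter (· ≤ k), p (σ l))
            ≤ ∑ k : Fin n, w (σ (Equiv.swap i j k))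
                * ∑ l ∈ Finset.univ.filter (· ≤ k), p (σ (Equiv.swap i j l))) := by
  constructor
  · exact Finset.sum_congr rfl fun j _ => Finset.mul_sum _ _ _
  · intro hsm i j hij
    set s : Equiv.Perm (Fin n) := Equiv.swap i j with hs
    have hij' : i ≤ j := le_of_lt hij
    have hij_ne : i ≠ j := ne_of_lt hij
    set pa := p (σ i) with hpa
    set pb := p (σ j) with hpb
    set wa := w (σ i) with hwa
    set wb := w (σ j) with hwb
    set F : Fin n → Finset (Fin n) := fun k => Finset.univ.filter (· ≤ k) with hF
    set P : Fin n → ℝ := fun k => ∑ l ∈ F k, p (σ l) with hP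
    -- prefix invariance for j ≤ k
    have h2 : ∀ k, j ≤ k → ∑ l ∈ F k, p (σ (s l)) = P k := by
      intro k hk
      refine Finset.sum_equiv s ?_ (fun l _ => rfl)
      intro l
      simp only [hF, Finset.mem_filter, Finset.mem_univ, true_and]
      rcases eq_or_ne l i with rfl | hli
      · rw [hs]; simp only [Equiv.swap_apply_left]
        exact iff_of_true (le_trans hij' hk) hk
      rcases eq_or_ne l j with rfl | hlj
      · rw [hs]; simp only [Equiv.swap_apply_right]
        exact iff_of_true hk (le_trans hij' hk)
      · rw [hs, Equiv.swap_apply_of_ne_of_ne hli hlj]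
    -- prefix shift for i ≤ k < j
    have h3 : ∀ k, i ≤ k → k < j → ∑ l ∈ F k, p (σ (s l)) = P k - pa + pb := by
      intro k hik hkj
      have hiF : i ∈ F k := by simp [hF, hik]
      have e1 : ∑ l ∈ (F k).erase i, p (σ (s l)) = ∑ l ∈ (F k).erase i, p (σ l) := by
        refine Finset.sum_congr rfl fun l hl => ?_
        have hli : l ≠ i := Finset.ne_of_mem_erase hl
        have hlk : l ≤ k := by
          have := Finset.mem_of_mem_erase hl
          simpa [hF] using this
        have hlj : l ≠ j := ne_of_lt (lt_of_le_of_lt hlk hkj)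
        rw [hs, Equiv.swap_apply_of_ne_of_ne hli hlj]
      have e2 : ∑ l ∈ F k, p (σ (s l)) = p (σ (s i)) + ∑ l ∈ (F k).erase i, p (σ (s l)) :=
        (Finset.add_sum_erase _ _ hiF).symm
      have e3 : P k = pa + ∑ l ∈ (F k).erase i, p (σ l) :=
        (Finset.add_sum_erase _ _ hiF).symm
      rw [e2, e1]
      rw [hs] ; rw [Equiv.swap_apply_left]
      rw [e3, ← hpb] ; ring
    set f : Fin n → ℝ := fun k => w (σ (s k)) * ∑ l ∈ F k, p (σ (s l)) - w (σ k) * P k with hf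
    have hT : ∀ k, k ∉ insert i (insert j (Finset.Ioo i j)) → f k = 0 := by
      intro k hk
      simp only [Finset.mem_insert, Finset.mem_Ioo, not_or, not_and] at hk
      obtain ⟨hki, hkj, hko⟩ := hk
      have hsk : s k = k := by rw [hs, Equiv.swap_apply_of_ne_of_ne hki hkj]
      rcases lt_or_ge k i with h | h
      · have hpre : ∑ l ∈ F k, p (σ (s l)) = P k := by
          refine Finset.sum_congr rfl fun l hl => ?_
          have hlk : l ≤ k := by simpa [hF] using hl
          have hli : l < i := lt_of_le_of_lt hlk h
          rw [hs, Equiv.swap_apply_of_ne_of_ne (ne_of_lt hli) (ne_of_lt (lt_trans hli hij))]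
        simp [hf, hsk, hpre]
      · have hik : i < k := lt_of_le_of_ne h (Ne.symm hki)
        have hjk : j ≤ k := le_of_not_gt (hko hik)
        simp [hf, hsk, h2 k hjk]
    have hiI : i ∉ insert j (Finset.Ioo i j) := by
      simp [hij_ne, Finset.mem_Ioo]
    have hjI : j ∉ Finset.Ioo i j := by simp
    have hsum : ∑ k, f k = f i + (f j + ∑ k ∈ Finset.Ioo i j, f k) := by
      rw [← Finset.sum_insert hjI, ← Finset.sum_insert hiI]
      exact (Finset.sum_subset (Finset.subset_univ _) fun k _ hk => hT k hk).symm
    have hfi : f i = wb * (P i - pa + pb) - wa * P i := by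
      rw [hf]
      simp only
      rw [h3 i le_rfl hij, hs, Equiv.swap_apply_left]
    have hfj : f j = wa * P j - wb * P j := by
      rw [hf]
      simp only
      rw [h2 j le_rfl, hs, Equiv.swap_apply_right]
    have hfm : ∀ m ∈ Finset.Ioo i j, f m = w (σ m) * (pb - pa) := by
      intro m hm
      rw [Finset.mem_Ioo] at hm
      have hsm' : s m = m := by
        rw [hs, Equiv.swap_apply_of_ne_of_ne (ne_of_gt hm.1) (ne_of_lt hm.2)]
      rw [hf]
      simp only
      rw [h3 m (le_of_lt hm.1) hm.2, hsm']
      ring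
    -- P j relation
    have hFj : F j = F i ∪ Finset.Ioc i j := by
      ext l
      simp only [hF, Finset.mem_filter, Finset.mem_univ, true_and, Finset.mem_union,
        Finset.mem_Ioc]
      constructor
      · intro h; rcases le_or_gt l i with h' | h'
        · exact Or.inl h'
        · exact Or.inr ⟨h', h⟩
      · rintro (h | ⟨h1, h2⟩)
        · exact le_trans h hij'
        · exact h2
    have hdisj : Disjoint (F i) (Finset.Ioc i j) := by
      rw [Finset.disjoint_left]
      intro l hl hl'
      rw [hF] at hl
      simp only [Finset.mem_filter, Finset.mem_univ, true_and] at hl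
      rw [Finset.mem_Ioc] at hl'
      exact absurd hl (not_le.mpr hl'.1)
    have hIoc : Finset.Ioc i j = insert j (Finset.Ioo i j) := (Finset.Ioo_insert_right hij).symm
    have hPj : P j = P i + (∑ m ∈ Finset.Ioo i j, p (σ m)) + pb := by
      have : P j = ∑ l ∈ F j, p (σ l) := by rw [hP]
      rw [this, hFj, Finset.sum_union hdisj, hIoc, Finset.sum_insert hjI]
      simp only [hP, hpb]
      ring
    -- Smith inequalities
    have hab : pa * wb ≤ pb * wa := by
      have := hsm i j hij'
      rw [div_le_div_iff₀ (hw _) (hw _)] at this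
      exact this
    have hterm : ∀ m ∈ Finset.Ioo i j,
        0 ≤ (wa - wb) * p (σ m) + (pb - pa) * w (σ m) := by
      intro m hm
      rw [Finset.mem_Ioo] at hm
      have h1 := hsm i m (le_of_lt hm.1)
      have h2' := hsm m j (le_of_lt hm.2)
      rw [div_le_div_iff₀ (hw _) (hw _)] at h1 h2'
      nlinarith
    have hmain : 0 ≤ (wa - wb) * (∑ m ∈ Finset.Ioo i j, p (σ m))
        + (pb - pa) * (∑ m ∈ Finset.Ioo i j, w (σ m)) := by
      rw [Finset.mul_sum, Finset.mul_sum, ← Finset.sum_add_distrib]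
      exact Finset.sum_nonneg hterm
    have hfms : ∑ k ∈ Finset.Ioo i j, f k
        = (pb - pa) * (∑ m ∈ Finset.Ioo i j, w (σ m)) := by
      rw [Finset.mul_sum, Finset.sum_congr rfl hfm]
      exact Finset.sum_congr rfl fun m _ => mul_comm _ _
    have key : 0 ≤ ∑ k, f k := by
      rw [hsum, hfi, hfj, hfms, hPj]
      nlinarith [hmain, hab]
    have hdiff : ∑ k, f k
        = (∑ k : Fin n, w (σ (s k)) * ∑ l ∈ F k, p (σ (s l)))
          - ∑ k : Fin n, w (σ k) * P k := by
      rw [← Finset.sum_sub_distrib]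
    have hgoal1 : (∑ k : Fin n, w (σ k) * ∑ l ∈ Finset.univ.filter (· ≤ k), p (σ l))
        = ∑ k : Fin n, w (σ k) * P k := by
      refine Finset.sum_congr rfl fun k _ => ?_
      rw [hP, hF]
    have hgoal2 : (∑ k : Fin n, w (σ (s k)) * ∑ l ∈ Finset.univ.filter (· ≤ k), p (σ (s l)))
        = ∑ k : Fin n, w (σ (s k)) * ∑ l ∈ F k, p (σ (s l)) := by
      refine Finset.sum_congr rfl fun k _ => ?_
      rw [hF]
    rw [hgoal1, hgoal2]
    linarith [key, hdiff.symm.le, hdiff.le]
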